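/- Let e and f be expressions and suppose e ≤ f holds under all relational interpretations. Then for every term u in Trm(e), there exists a term v in Trm(f) and a graph homomorphism from G(v) to G(u). (Key step: interpret each variable a over the vertex set of G(u) by the relation σ(a) = {(p,q) | (p,a,q) is an edge of G(u)}; then σ̂(u) contains the pair (input of G(u), output of G(u)), hence so does σ̂(f), and the Andréka–Bredikhin lemma yields the homomorphism.) -/

import Mathlib

/-- A 2-pointed labelled directed graph over label set `X`:
a finite vertex type, a set of labelled edges, and distinguished
input and output vertices. -/
structure PGraph (X : Type) where
  V : Type
  fin : Finite V
  E : Set (V × X × V)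
  inp : V
  out : V

/-- A graph homomorphism preserves the input, the output, and labelled edges. -/
def IsHom {X : Type} (G H : PGraph X) (φ : G.V → H.V) : Prop :=
  φ G.inp = H.inp ∧ φ G.out = H.out ∧
    ∀ p a q, (p, a, q) ∈ G.E → (φ p, a, φ q) ∈ H.E

/-- `gle G G'` (written `G ≲ G'`) iff there is a homomorphism from `G'` to `G`. -/
def gle {X : Type} (G G' : PGraph X) : Prop := ∃ φ : G'.V → G.V, IsHom G' G φ

/-- Graph of a variable: two vertices, one labelled edge from input to output. -/
def gvar {X : Type} (a : X) : PGraph X :=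
  ⟨Bool, inferInstance, {(false, a, true)}, false, true⟩

/-- Graph of `1`: one vertex, no edges. -/
def gone {X : Type} : PGraph X := ⟨Unit, inferInstance, ∅, (), ()⟩

/-- Graph of `⊤`: two isolated vertices. -/
def gtop {X : Type} : PGraph X := ⟨Bool, inferInstance, ∅, false, true⟩

/-- Converse of a graph: swap input and output. -/
def gconv {X : Type} (G : PGraph X) : PGraph X := ⟨G.V, G.fin, G.E, G.out, G.inp⟩

/-- Series composition: merge the output of `G` with the input of `H`. -/
def gseq {X : Type} (G H : PGraph X) : PGraph X :=
  let r : G.V ⊕ H.V → G.V ⊕ H.V → Prop :=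
    fun x y => x = Sum.inl G.out ∧ y = Sum.inr H.inp
  { V := Quot r
    fin := by
      have := G.fin; have := H.fin
      exact Finite.of_surjective (Quot.mk r) (fun q => Quot.exists_rep q)
    E := { e | (∃ p a q, (p, a, q) ∈ G.E ∧
                  e = (Quot.mk r (.inl p), a, Quot.mk r (.inl q)))
             ∨ (∃ p a q, (p, a, q) ∈ H.E ∧
                  e = (Quot.mk r (.inr p), a, Quot.mk r (.inr q))) }
    inp := Quot.mk r (.inl G.inp)
    out := Quot.mk r (.inr H.out) }

/-- Parallel composition: merge the inputs and merge the outputs. -/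
def gpar {X : Type} (G H : PGraph X) : PGraph X :=
  let r : G.V ⊕ H.V → G.V ⊕ H.V → Prop :=
    fun x y => (x = Sum.inl G.inp ∧ y = Sum.inr H.inp) ∨
               (x = Sum.inl G.out ∧ y = Sum.inr H.out)
  { V := Quot r
    fin := by
      have := G.fin; have := H.fin
      exact Finite.of_surjective (Quot.mk r) (fun q => Quot.exists_rep q)
    E := { e | (∃ p a q, (p, a, q) ∈ G.E ∧
                  e = (Quot.mk r (.inl p), a, Quot.mk r (.inl q)))
             ∨ (∃ p a q, (p, a, q) ∈ H.E ∧
                  e = (Quot.mk r (.inr p), a, Quot.mk r (.inr q))) }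
    inp := Quot.mk r (.inl G.inp)
    out := Quot.mk r (.inl G.out) }

/-- Terms: variables, composition, intersection, converse, `1` and `⊤`. -/
inductive Trm (X : Type) : Type
  | var : X → Trm X
  | comp : Trm X → Trm X → Trm X
  | inter : Trm X → Trm X → Trm X
  | conv : Trm X → Trm X
  | one : Trm X
  | top : Trm X

/-- The graph of a term. -/
def grOf {X : Type} : Trm X → PGraph X
  | .var a => gvar a
  | .comp u v => gseq (grOf u) (grOf v)
  | .inter u v => gpar (grOf u) (grOf v)
  | .conv u => gconv (grOf u)
  | .one => gone
  | .top => gtop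

/-- Relational interpretation of a term, given an interpretation `σ`
of the variables as binary relations on `S`. -/
def interp {X S : Type} (σ : X → S → S → Prop) : Trm X → S → S → Prop
  | .var a => σ a
  | .comp u v => fun i j => ∃ k, interp σ u i k ∧ interp σ v k j
  | .inter u v => fun i j => interp σ u i j ∧ interp σ v i j
  | .conv u => fun i j => interp σ u j i
  | .one => fun i j => i = j
  | .top => fun _ _ => True

/-- Expressions: terms extended with `0`, union and strict iteration. -/
inductive Expr (X : Type) : Type
  | var : X → Expr X
  | comp : Expr X → Expr X → Expr X
  | inter : Expr X → Expr X → Expr X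
  | plus : Expr X → Expr X → Expr X
  | iter : Expr X → Expr X
  | conv : Expr X → Expr X
  | zero : Expr X
  | one : Expr X
  | top : Expr X

/-- The set of terms of an expression. -/
def trms {X : Type} : Expr X → Set (Trm X)
  | .var a => {Trm.var a}
  | .comp e f => {w | ∃ u ∈ trms e, ∃ v ∈ trms f, w = Trm.comp u v}
  | .inter e f => {w | ∃ u ∈ trms e, ∃ v ∈ trms f, w = Trm.inter u v}
  | .plus e f => trms e ∪ trms f
  | .iter e => {w | ∃ u, ∃ l : List (Trm X),
      u ∈ trms e ∧ (∀ v ∈ l, v ∈ trms e) ∧ w = l.foldl Trm.comp u}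
  | .conv e => {w | ∃ u ∈ trms e, w = Trm.conv u}
  | .zero => ∅
  | .one => {Trm.one}
  | .top => {Trm.top}

/-- Relational interpretation of an expression. -/
def einterp {X S : Type} (σ : X → S → S → Prop) : Expr X → S → S → Prop
  | .var a => σ a
  | .comp e f => fun i j => ∃ k, einterp σ e i k ∧ einterp σ f k j
  | .inter e f => fun i j => einterp σ e i j ∧ einterp σ f i j
  | .plus e f => fun i j => einterp σ e i j ∨ einterp σ f i j
  | .iter e => Relation.TransGen (einterp σ e)
  | .conv e => fun i j => einterp σ e j i
  | .zero => fun _ _ => False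
  | .one => fun i j => i = j
  | .top => fun _ _ => True

/-!
Read the edges of `G(u)` as a relational interpretation `σ` on its vertices: `σ a` holds of
`(p, q)` iff `(p, a, q)` is an edge. A map from a graph into this structure is then exactly a
graph homomorphism into `G(u)`. The identity of `G(u)` thus witnesses, by the Andréka–Bredikhin
lemma, that `σ̂(u)` contains (input, output); this pair therefore lies in `σ̂(e) ⊆ σ̂(f)`, hence
in `σ̂(v)` for some term `v` of `f`, and the lemma read backwards yields the homomorphism
`G(v) → G(u)`.
-/

def IsRelHom {X S : Type} (G : PGraph X) (σ : X → S → S → Prop) (i j : S)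
    (φ : G.V → S) : Prop :=
  φ G.inp = i ∧ φ G.out = j ∧ ∀ p a q, (p, a, q) ∈ G.E → σ a (φ p) (φ q)

def PGraph.edgeRel {X : Type} (G : PGraph X) : X → G.V → G.V → Prop :=
  fun a p q => (p, a, q) ∈ G.E

section AndrekaBredikhin

variable {X S : Type} {σ : X → S → S → Prop} {i j : S}

theorem isRelHom_edgeRel_iff_isHom {G H : PGraph X} {φ : G.V → H.V} :
    IsRelHom G H.edgeRel H.inp H.out φ ↔ IsHom G H φ :=
  Iff.rfl

theorem exists_isRelHom_gvar_iff {a : X} :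
    (∃ φ, IsRelHom (gvar a) σ i j φ) ↔ σ a i j := by
  constructor
  · rintro ⟨φ, rfl, rfl, hE⟩
    exact hE false a true rfl
  · intro h
    refine ⟨fun b => cond b j i, rfl, rfl, ?_⟩
    rintro p a' q ⟨⟩
    exact h

theorem exists_isRelHom_gone_iff : (∃ φ, IsRelHom (gone : PGraph X) σ i j φ) ↔ i = j := by
  constructor
  · rintro ⟨φ, rfl, rfl, -⟩
    rfl
  · rintro rfl
    exact ⟨fun _ => i, rfl, rfl, fun _ _ _ h => h.elim⟩

theorem exists_isRelHom_gtop : ∃ φ, IsRelHom (gtop : PGraph X) σ i j φ :=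
  ⟨fun b => cond b j i, rfl, rfl, fun _ _ _ h => h.elim⟩

theorem exists_isRelHom_gconv_iff {G : PGraph X} :
    (∃ φ, IsRelHom (gconv G) σ i j φ) ↔ ∃ φ, IsRelHom G σ j i φ :=
  exists_congr fun _ => ⟨fun ⟨hi, hj, hE⟩ => ⟨hj, hi, hE⟩, fun ⟨hj, hi, hE⟩ => ⟨hi, hj, hE⟩⟩

theorem exists_isRelHom_gseq_iff {G H : PGraph X} :
    (∃ φ, IsRelHom (gseq G H) σ i j φ) ↔
      ∃ k, (∃ φ, IsRelHom G σ i k φ) ∧ ∃ ψ, IsRelHom H σ k j ψ := by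
  constructor
  · rintro ⟨φ, hinp, hout, hE⟩
    have glue : (Quot.mk _ (.inl G.out) : (gseq G H).V) = Quot.mk _ (.inr H.inp) :=
      Quot.sound ⟨rfl, rfl⟩
    refine ⟨φ (Quot.mk _ (.inl G.out)),
      ⟨fun p => φ (Quot.mk _ (.inl p)), hinp, rfl,
        fun p a q hpq => hE _ _ _ (.inl ⟨p, a, q, hpq, rfl⟩)⟩,
      ⟨fun p => φ (Quot.mk _ (.inr p)), by rw [glue], hout,
        fun p a q hpq => hE _ _ _ (.inr ⟨p, a, q, hpq, rfl⟩)⟩⟩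
  · rintro ⟨k, ⟨φ, hinp, hk, hφ⟩, ⟨ψ, hk', hout, hψ⟩⟩
    refine ⟨Quot.lift (Sum.elim φ ψ) ?_, hinp, hout, ?_⟩
    · rintro _ _ ⟨rfl, rfl⟩
      simp [hk, hk']
    · rintro _ _ _ (⟨p, a, q, hpq, he⟩ | ⟨p, a, q, hpq, he⟩) <;> cases he
      exacts [hφ _ _ _ hpq, hψ _ _ _ hpq]

theorem exists_isRelHom_gpar_iff {G H : PGraph X} :
    (∃ φ, IsRelHom (gpar G H) σ i j φ) ↔
      (∃ φ, IsRelHom G σ i j φ) ∧ ∃ ψ, IsRelHom H σ i j ψ := by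
  constructor
  · rintro ⟨φ, hinp, hout, hE⟩
    have glue_inp : (Quot.mk _ (.inl G.inp) : (gpar G H).V) = Quot.mk _ (.inr H.inp) :=
      Quot.sound (.inl ⟨rfl, rfl⟩)
    have glue_out : (Quot.mk _ (.inl G.out) : (gpar G H).V) = Quot.mk _ (.inr H.out) :=
      Quot.sound (.inr ⟨rfl, rfl⟩)
    exact ⟨⟨fun p => φ (Quot.mk _ (.inl p)), hinp, hout,
        fun p a q hpq => hE _ _ _ (.inl ⟨p, a, q, hpq, rfl⟩)⟩,
      ⟨fun p => φ (Quot.mk _ (.inr p)), (congrArg φ glue_inp).symm.trans hinp,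
        (congrArg φ glue_out).symm.trans hout,
        fun p a q hpq => hE _ _ _ (.inr ⟨p, a, q, hpq, rfl⟩)⟩⟩
  · rintro ⟨⟨φ, hinp, hout, hφ⟩, ⟨ψ, hinp', hout', hψ⟩⟩
    refine ⟨Quot.lift (Sum.elim φ ψ) ?_, hinp, hout, ?_⟩
    · rintro _ _ (⟨rfl, rfl⟩ | ⟨rfl, rfl⟩)
      · simp [hinp, hinp']
      · simp [hout, hout']
    · rintro _ _ _ (⟨p, a, q, hpq, he⟩ | ⟨p, a, q, hpq, he⟩) <;> cases he
      exacts [hφ _ _ _ hpq, hψ _ _ _ hpq]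

/-- The Andréka–Bredikhin lemma. -/
theorem interp_iff_exists_isRelHom (u : Trm X) :
    interp σ u i j ↔ ∃ φ, IsRelHom (grOf u) σ i j φ := by
  induction u generalizing i j with
  | var a => simp only [interp, grOf, exists_isRelHom_gvar_iff]
  | comp u v ihu ihv => simp only [interp, grOf, exists_isRelHom_gseq_iff, ihu, ihv]
  | inter u v ihu ihv => simp only [interp, grOf, exists_isRelHom_gpar_iff, ihu, ihv]
  | conv u ihu => simp only [interp, grOf, exists_isRelHom_gconv_iff, ihu]
  | one => exact exists_isRelHom_gone_iff.symm
  | top => exact iff_of_true trivial exists_isRelHom_gtop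

end AndrekaBredikhin

section Expressions

variable {X S : Type} {σ : X → S → S → Prop}

theorem transGen_iff_exists_foldl_comp {T : Set (Trm X)} {R : S → S → Prop}
    (hR : ∀ i j, R i j ↔ ∃ u ∈ T, interp σ u i j) {i j : S} :
    Relation.TransGen R i j ↔
      ∃ u ∈ T, ∃ l : List (Trm X), (∀ v ∈ l, v ∈ T) ∧ interp σ (l.foldl Trm.comp u) i j := by
  constructor
  · intro h
    induction h with
    | single hij =>
      obtain ⟨u, hu, hiu⟩ := (hR _ _).1 hij
      exact ⟨u, hu, [], by simp, hiu⟩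
    | tail _ hjk ih =>
      obtain ⟨u, hu, l, hl, hu'⟩ := ih
      obtain ⟨w, hw, hw'⟩ := (hR _ _).1 hjk
      refine ⟨u, hu, l ++ [w], ?_, ?_⟩
      · simpa [or_imp, forall_and] using ⟨hl, hw⟩
      · rw [List.foldl_append]
        exact ⟨_, hu', hw'⟩
  · rintro ⟨u, hu, l, hl, h⟩
    induction l using List.reverseRecOn generalizing j with
    | nil => exact .single ((hR _ _).2 ⟨u, hu, h⟩)
    | append_singleton l w ih =>
      rw [List.foldl_append] at h
      obtain ⟨k, hik, hkj⟩ := h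
      exact .tail (ih (fun v hv => hl v (by simp [hv])) hik)
        ((hR _ _).2 ⟨w, hl w (by simp), hkj⟩)

theorem einterp_iff_exists_trm (e : Expr X) {i j : S} :
    einterp σ e i j ↔ ∃ u ∈ trms e, interp σ u i j := by
  induction e generalizing i j with
  | var a => simp [einterp, trms, interp]
  | comp e f ihe ihf =>
    constructor
    · rintro ⟨k, hik, hkj⟩
      obtain ⟨u, hu, hiu⟩ := ihe.1 hik
      obtain ⟨v, hv, hkv⟩ := ihf.1 hkj
      exact ⟨.comp u v, ⟨u, hu, v, hv, rfl⟩, k, hiu, hkv⟩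
    · rintro ⟨_, ⟨u, hu, v, hv, rfl⟩, k, hiu, hkv⟩
      exact ⟨k, ihe.2 ⟨u, hu, hiu⟩, ihf.2 ⟨v, hv, hkv⟩⟩
  | inter e f ihe ihf =>
    constructor
    · rintro ⟨hi, hj⟩
      obtain ⟨u, hu, hiu⟩ := ihe.1 hi
      obtain ⟨v, hv, hjv⟩ := ihf.1 hj
      exact ⟨.inter u v, ⟨u, hu, v, hv, rfl⟩, hiu, hjv⟩
    · rintro ⟨_, ⟨u, hu, v, hv, rfl⟩, hiu, hjv⟩
      exact ⟨ihe.2 ⟨u, hu, hiu⟩, ihf.2 ⟨v, hv, hjv⟩⟩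
  | plus e f ihe ihf => simp [einterp, trms, ihe, ihf, or_and_right, exists_or]
  | iter e ihe =>
    rw [einterp, transGen_iff_exists_foldl_comp fun _ _ => ihe]
    constructor
    · rintro ⟨u, hu, l, hl, h⟩
      exact ⟨_, ⟨u, l, hu, hl, rfl⟩, h⟩
    · rintro ⟨_, ⟨u, l, hu, hl, rfl⟩, h⟩
      exact ⟨u, hu, l, hl, h⟩
  | conv e ihe => simp [einterp, trms, interp, ihe]
  | zero => simp [einterp, trms]
  | one => simp [einterp, trms, interp]
  | top => simp [einterp, trms, interp]

end Expressions

/-- If `e ≤ f` holds under all relational interpretations, then every term of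
`e` is dominated (modulo homomorphism) by some term of `f`. -/
theorem trm_hom_of_rel_le {X : Type} (e f : Expr X)
    (h : ∀ (S : Type) (σ : X → S → S → Prop) (i j : S),
      einterp σ e i j → einterp σ f i j) :
    ∀ u ∈ trms e, ∃ v ∈ trms f,
      ∃ φ : (grOf v).V → (grOf u).V, IsHom (grOf v) (grOf u) φ := by
  intro u hu
  let σ := (grOf u).edgeRel
  have hu_sat : interp σ u (grOf u).inp (grOf u).out :=
    (interp_iff_exists_isRelHom u).2
      ⟨id, isRelHom_edgeRel_iff_isHom.2 ⟨rfl, rfl, fun _ _ _ => id⟩⟩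
  have hf_sat : einterp σ f (grOf u).inp (grOf u).out :=
    h _ σ _ _ ((einterp_iff_exists_trm e).2 ⟨u, hu, hu_sat⟩)
  obtain ⟨v, hv, hv_sat⟩ := (einterp_iff_exists_trm f).1 hf_sat
  obtain ⟨φ, hφ⟩ := (interp_iff_exists_isRelHom v).1 hv_sat
  exact ⟨v, hv, φ, isRelHom_edgeRel_iff_isHom.1 hφ⟩
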